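/- For every integer m ≥ 2, ∑_{j=1}^{m} (-1)^j · (s^m_j)/j = 0, where s^m_j denotes the number of surjective maps from {1,...,m} onto {1,...,j}. -/

import Mathlib

/-!
Sorting the maps `Fin m → Fin n` by their image gives `n ^ m = ∑ j, n.choose j * s^m_j`, so
`X ^ m = ∑ j, (s^m_j / j!) • X (X - 1) ⋯ (X - j + 1)` holds at every natural number and hence as
a polynomial identity. The coefficient of `X` in the `j`-th falling factorial is
`(-1) ^ (j - 1) * (j - 1)!`, while in `X ^ m` it vanishes for `m ≥ 2`; comparing these
coefficients is the claim.
-/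

/-- `s^m_j`: the number of surjective maps from an `m`-element set onto a `j`-element set. -/
def surjCount (m j : ℕ) : ℕ :=
  Fintype.card {f : Fin m → Fin j // Function.Surjective f}

open Finset Polynomial Nat

section Counting

variable {α β : Type*} [Finite α] [Finite β]

theorem natCard_surjective_eq_surjCount :
    Nat.card {f : α → β // Function.Surjective f} = surjCount (Nat.card α) (Nat.card β) := by
  rw [surjCount, ← Nat.card_eq_fintype_card]
  exact Nat.card_congr <| Equiv.subtypeEquiv
    (Equiv.arrowCongr (Finite.equivFin α) (Finite.equivFin β))
    fun f => ((Equiv.comp_surjective _ _).trans (Equiv.surjective_comp _ _)).symm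

theorem natCard_range_eq_surjCount (s : Set β) :
    Nat.card {f : α → β // Set.range f = s} = surjCount (Nat.card α) (Nat.card s) := by
  rw [← natCard_surjective_eq_surjCount]
  exact Nat.card_congr
    { toFun := fun f => ⟨s.codRestrict f.1 (fun a => f.2.subset (Set.mem_range_self a)),
        (Set.surjective_codRestrict _).2 f.2⟩
      invFun := fun g => ⟨Subtype.val ∘ g.1, by rw [Set.range_comp, g.2.range_eq]; simp⟩
      left_inv := fun f => rfl
      right_inv := fun g => rfl }

end Counting

theorem sum_choose_mul_surjCount (m n : ℕ) :
    ∑ j ∈ range (n + 1), n.choose j * surjCount m j = n ^ m := by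
  classical
  have hfiber (s : Finset (Fin n)) :
      #{f : Fin m → Fin n | univ.image f = s} = surjCount m #s := by
    have := natCard_range_eq_surjCount (α := Fin m) (s : Set (Fin n))
    rw [Nat.card_fin, Nat.card_coe_set_eq, Set.ncard_coe_finset] at this
    simpa only [← Fintype.coe_image_univ, coe_inj, Nat.card_eq_fintype_card,
      Fintype.card_subtype] using this
  have hsubsets := sum_powerset_apply_card (fun j => surjCount m j) (x := (univ : Finset (Fin n)))
  simp only [powerset_univ, Finset.card_fin, smul_eq_mul] at hsubsets
  rw [← hsubsets, ← sum_congr rfl fun s _ => hfiber s,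
    ← card_eq_sum_card_fiberwise fun _ _ => mem_univ _]
  simp

theorem surjCount_eq_zero_of_lt {m j : ℕ} (h : m < j) : surjCount m j = 0 := by
  rw [surjCount, Fintype.card_eq_zero_iff]
  refine ⟨fun f => ?_⟩
  have := Fintype.card_le_of_surjective f.1 f.2
  simp only [Fintype.card_fin] at this
  omega

theorem sum_range_choose_mul_surjCount (m n : ℕ) :
    ∑ j ∈ range (m + 1), n.choose j * surjCount m j = n ^ m := by
  have hvanish (j : ℕ) (hj : n < j ∨ m < j) : n.choose j * surjCount m j = 0 := by
    rcases hj with hj | hj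
    · rw [choose_eq_zero_of_lt hj, zero_mul]
    · rw [surjCount_eq_zero_of_lt hj, mul_zero]
  have hextend (k : ℕ) (hk : k = m ∨ k = n) :
      ∑ j ∈ range (k + 1), n.choose j * surjCount m j =
        ∑ j ∈ range (m + n + 1), n.choose j * surjCount m j :=
    sum_subset (range_subset_range.2 (by omega)) fun j hj hj' => by
      simp only [mem_range] at hj hj'
      exact hvanish j (by omega)
  rw [hextend m (.inl rfl), ← hextend n (.inr rfl), sum_choose_mul_surjCount]

section Pochhammer

variable (R : Type*) [CommRing R]

theorem descPochhammer_eval_neg_one (k : ℕ) :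
    (descPochhammer R k).eval (-1) = (-1) ^ k * k ! := by
  induction k with
  | zero => simp
  | succ k ih =>
    rw [descPochhammer_succ_right, eval_mul, ih, eval_sub, eval_X, eval_natCast,
      factorial_succ, pow_succ]
    push_cast
    ring

theorem coeff_descPochhammer_succ_one (k : ℕ) :
    (descPochhammer R (k + 1)).coeff 1 = (-1) ^ k * k ! := by
  rw [descPochhammer_succ_left, coeff_X_mul, coeff_zero_eq_eval_zero, eval_comp, eval_sub,
    eval_X, eval_one, zero_sub, descPochhammer_eval_neg_one]

end Pochhammer

theorem sum_surjCount_div_factorial_mul_descPochhammer (K : Type*) [Field K] [CharZero K]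
    (m : ℕ) :
    ∑ j ∈ range (m + 1), C ((surjCount m j : K) / j !) * descPochhammer K j = X ^ m := by
  refine eq_of_infinite_eval_eq _ _ <|
    (Set.infinite_range_of_injective Nat.cast_injective).mono ?_
  rintro - ⟨n, rfl⟩
  have hterm (j : ℕ) :
      (C ((surjCount m j : K) / j !) * descPochhammer K j).eval (n : K) =
        n.choose j * surjCount m j := by
    rw [eval_mul, eval_C, descPochhammer_eval_eq_descFactorial,
      descFactorial_eq_factorial_mul_choose]
    have : (j ! : K) ≠ 0 := Nat.cast_ne_zero.2 (factorial_ne_zero j)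
    push_cast
    field_simp
  simp only [Set.mem_ofPred_eq, eval_finsetSum, hterm, eval_pow, eval_X]
  exact_mod_cast sum_range_choose_mul_surjCount m n

/-- For every integer `m ≥ 2`, `∑_{j=1}^{m} (-1)^j · s^m_j / j = 0`. -/
theorem surj_alternating_sum (m : ℕ) (hm : 2 ≤ m) :
    ∑ j ∈ Finset.Icc 1 m, (-1 : ℚ) ^ j * (surjCount m j : ℚ) / (j : ℚ) = 0 := by
  have hcoeff : (∑ j ∈ range (m + 1),
      C ((surjCount m j : ℚ) / j !) * descPochhammer ℚ j).coeff 1 = 0 := by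
    rw [sum_surjCount_div_factorial_mul_descPochhammer, coeff_X_pow, if_neg (by omega)]
  rw [finsetSum_coeff, sum_range_succ'] at hcoeff
  simp only [coeff_C_mul, coeff_descPochhammer_succ_one, descPochhammer_zero, coeff_one,
    one_ne_zero, if_false, mul_zero, add_zero] at hcoeff
  rw [← Ico_add_one_right_eq_Icc, sum_Ico_eq_sum_range, Nat.add_sub_cancel,
    ← neg_eq_zero, ← hcoeff, ← sum_neg_distrib]
  refine sum_congr rfl fun i _ => ?_
  rw [add_comm 1 i, factorial_succ]
  have : (i ! : ℚ) ≠ 0 := Nat.cast_ne_zero.2 (factorial_ne_zero i)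
  push_cast
  field_simp
  ring
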